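/- Let f be a positive real-valued function on the positive integers. Define couplings recursively by t_0 = 1 and t_n = f(n) · λ(n−1, 0) for n ≥ 1, where λ(m, 0) = Σ_{i=0}^{m} binom(m, i) t_i. Then λ(m−1, 0)/λ(m, 0) ≤ 1/f(m) for every m ≥ 1; consequently, if Σ_{n=1}^{∞} 1/f(n) < ∞, the infinite product Π_{n=1}^{∞} (1 − λ(n−1, 0)/λ(n, 0)) converges to a strictly positive limit. -/

import Mathlib

/-- `lam t m = λ(m, 0) = Σ_{i=0}^{m} C(m, i) t_i`. -/
noncomputable def lam (t : ℕ → ℝ) (m : ℕ) : ℝ :=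
  ∑ i ∈ Finset.range (m + 1), (m.choose i : ℝ) * t i

/-- for couplings given recursively by `t_0 = 1`,
`t_n = f(n) λ(n-1, 0)` with `f` positive, one has `λ(m-1,0)/λ(m,0) ≤ 1/f(m)` for all
`m ≥ 1`; consequently, if `Σ_{n≥1} 1/f(n) < ∞` the infinite product
`Π_{n≥1} (1 - λ(n-1,0)/λ(n,0))` converges to a strictly positive limit. -/
theorem stmt_9 (f t : ℕ → ℝ) (hf : ∀ n : ℕ, 1 ≤ n → 0 < f n)
    (h0 : t 0 = 1) (hrec : ∀ n : ℕ, 1 ≤ n → t n = f n * lam t (n - 1)) :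
    (∀ m : ℕ, 1 ≤ m → lam t (m - 1) / lam t m ≤ 1 / f m) ∧
    (Summable (fun n : ℕ => 1 / f (n + 1)) →
      ∃ L : ℝ, 0 < L ∧
        Filter.Tendsto
          (fun s : ℕ => ∏ n ∈ Finset.Icc 1 s, (1 - lam t (n - 1) / lam t n))
          Filter.atTop (nhds L)) := by
  -- positivity of t
  have ht : ∀ n : ℕ, 0 < t n := by
    intro n
    induction n using Nat.strong_induction_on with
    | _ n ih =>
      rcases Nat.eq_zero_or_pos n with h | h
      · simp [h, h0]
      · rw [hrec n h]
        refine mul_pos (hf n h) ?_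
        refine Finset.sum_pos (fun i hi => ?_) ⟨0, by simp⟩
        refine mul_pos ?_ (ih i ?_)
        · exact_mod_cast Nat.choose_pos (Nat.lt_succ_iff.mp (Finset.mem_range.mp hi))
        · have := Finset.mem_range.mp hi
          omega
  have hlam : ∀ m : ℕ, 0 < lam t m := by
    intro m
    refine Finset.sum_pos (fun i hi => mul_pos ?_ (ht i)) ⟨0, by simp⟩
    exact_mod_cast Nat.choose_pos (Nat.lt_succ_iff.mp (Finset.mem_range.mp hi))
  -- key inequality : f m * lam t (m-1) ≤ lam t m
  have key : ∀ m : ℕ, 1 ≤ m → f m * lam t (m - 1) ≤ lam t m := by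
    intro m hm
    have h1 : (m.choose m : ℝ) * t m ≤ ∑ i ∈ Finset.range (m + 1), (m.choose i : ℝ) * t i :=
      Finset.single_le_sum (f := fun i => (m.choose i : ℝ) * t i)
        (fun i _ => mul_nonneg (Nat.cast_nonneg _) (ht i).le) (Finset.self_mem_range_succ m)
    rw [Nat.choose_self, Nat.cast_one, one_mul, hrec m hm] at h1
    exact h1
  -- strict monotonicity : lam t (m-1) < lam t m
  have hlt : ∀ m : ℕ, 1 ≤ m → lam t (m - 1) < lam t m := by
    intro m hm
    have hm1 : m - 1 + 1 = m := Nat.succ_pred_eq_of_pos hm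
    have h2 : lam t (m - 1) ≤ ∑ i ∈ Finset.range m, (m.choose i : ℝ) * t i := by
      rw [lam, hm1]
      refine Finset.sum_le_sum (fun i _ => ?_)
      refine mul_le_mul_of_nonneg_right ?_ (ht i).le
      exact_mod_cast Nat.choose_le_choose i (Nat.sub_le m 1)
    have h3 : lam t m = (∑ i ∈ Finset.range m, (m.choose i : ℝ) * t i)
        + (m.choose m : ℝ) * t m := by
      rw [lam, Finset.sum_range_succ]
    have h4 : 0 < (m.choose m : ℝ) * t m := by
      simp [Nat.choose_self]; exact ht m
    linarith
  have part1 : ∀ m : ℕ, 1 ≤ m → lam t (m - 1) / lam t m ≤ 1 / f m := by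
    intro m hm
    rw [div_le_div_iff₀ (hlam m) (hf m hm)]
    have := key m hm
    nlinarith [hlam (m - 1)]
  refine ⟨part1, fun hs => ?_⟩
  -- setup
  set c : ℕ → ℝ := fun n => lam t n / lam t (n + 1) with hc
  have hc_pos : ∀ n, 0 < c n := fun n => div_pos (hlam n) (hlam (n + 1))
  have hc_lt1 : ∀ n, c n < 1 := by
    intro n
    rw [hc]
    exact (div_lt_one (hlam (n + 1))).mpr (by simpa using hlt (n + 1) (Nat.le_add_left 1 n))
  have hc_le : ∀ n, c n ≤ 1 / f (n + 1) := by
    intro n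
    simpa using part1 (n + 1) (Nat.le_add_left 1 n)
  have hc_sum : Summable c :=
    Summable.of_nonneg_of_le (fun n => (hc_pos n).le) hc_le hs
  set g : ℕ → ℝ := fun n => 1 - c n with hg
  have hg_pos : ∀ n, 0 < g n := fun n => by simp [hg]; linarith [hc_lt1 n]
  -- summability of logs
  have hlog_sum : Summable (fun n => Real.log (g n)) := by
    refine Summable.of_norm_bounded_eventually_nat (g := fun n => 2 * c n)
      (hc_sum.mul_left 2) ?_
    have hc0 : Filter.Tendsto c Filter.atTop (nhds 0) := hc_sum.tendsto_atTop_zero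
    filter_upwards [hc0.eventually_le_const (show (0:ℝ) < 1/2 by norm_num)] with n hn
    have hgn := hg_pos n
    have hlog_le : Real.log ((g n)⁻¹) ≤ (g n)⁻¹ - 1 :=
      Real.log_le_sub_one_of_pos (inv_pos.mpr hgn)
    rw [Real.log_inv] at hlog_le
    have hinv : (g n)⁻¹ ≤ 1 + 2 * c n := by
      rw [inv_le_iff_one_le_mul₀ hgn]
      have hgdef : g n = 1 - c n := rfl
      have := hc_pos n
      rw [hgdef]
      nlinarith
    have hlogn : Real.log (g n) ≤ 0 :=
      Real.log_nonpos hgn.le (by simp [hg]; linarith [hc_pos n])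
    rw [Real.norm_eq_abs, abs_of_nonpos hlogn]
    linarith
  set S := ∑' n, Real.log (g n) with hS
  refine ⟨Real.exp S, Real.exp_pos S, ?_⟩
  have hsum : Filter.Tendsto (fun s => ∑ i ∈ Finset.range s, Real.log (g i))
      Filter.atTop (nhds S) := hlog_sum.hasSum.tendsto_sum_nat
  have heq : ∀ s : ℕ, (∏ n ∈ Finset.Icc 1 s, (1 - lam t (n - 1) / lam t n))
      = Real.exp (∑ i ∈ Finset.range s, Real.log (g i)) := by
    intro s
    rw [Real.exp_sum, ← Finset.Ico_add_one_right_eq_Icc, Finset.prod_Ico_eq_prod_range]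
    simp only [Nat.add_sub_cancel]
    refine Finset.prod_congr rfl (fun i _ => ?_)
    rw [Real.exp_log (hg_pos i)]
    show 1 - lam t (1 + i - 1) / lam t (1 + i) = 1 - lam t i / lam t (i + 1)
    rw [Nat.add_comm 1 i, Nat.add_sub_cancel]
  have : Filter.Tendsto (fun s => Real.exp (∑ i ∈ Finset.range s, Real.log (g i)))
      Filter.atTop (nhds (Real.exp S)) :=
    (Real.continuous_exp.tendsto S).comp hsum
  exact (Filter.tendsto_congr heq).mpr this
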